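/- Let q be a prime power and let f, g be monic irreducible homogeneous polynomials in F_q[x,y] of the same degree n ≥ 4. If f and g lie in the same orbit under the action of PGL₂(F_q), then Cross(f) = Cross(g). -/

import Mathlib

open MvPolynomial

/-- The dehomogenization `f(x,1)` of a bivariate polynomial. -/
noncomputable def dehom {F : Type*} [CommRing F] (f : MvPolynomial (Fin 2) F) :
    Polynomial F :=
  MvPolynomial.aeval ![Polynomial.X, 1] f

/-- A homogeneous bivariate polynomial of degree `n` is monic if the coefficient of
`x^n` is `1` (equivalently, `f(x,1)` is monic of degree `n`). -/
def MonicHom {F : Type*} [CommRing F] (f : MvPolynomial (Fin 2) F) (n : ℕ) : Prop :=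
  MvPolynomial.coeff (Finsupp.single (0 : Fin 2) n) f = 1

/-- Linear substitution of the variables of a bivariate polynomial by a matrix `N`:
`(substM N f)(v) = f(N·v)`. -/
noncomputable def substM {F : Type*} [Field F]
    (N : Matrix (Fin 2) (Fin 2) F) (f : MvPolynomial (Fin 2) F) :
    MvPolynomial (Fin 2) F :=
  MvPolynomial.aeval (fun i => C (N i 0) * X 0 + C (N i 1) * X 1) f

/-- The cross ratio `χ` of the first four Frobenius conjugates `α, α^q, α^{q²}, α^{q³}`
of `α`. -/
noncomputable def crossRatio {K : Type*} [Field K] (q : ℕ) (α : K) : K :=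
  ((α ^ q ^ 3 - α ^ q) * (α ^ q ^ 2 - α)) /
    ((α ^ q ^ 3 - α) * (α ^ q ^ 2 - α ^ q))

/-- The characteristic polynomial over `F` of an element `χ` of an extension of
degree `n`: the `(n/d)`-th power of the minimal polynomial of `χ`, where `d` is the
degree of the minimal polynomial. -/
noncomputable def charPolyOfElt (F : Type*) [Field F] {K : Type*} [Field K]
    [Algebra F K] (n : ℕ) (χ : K) : Polynomial F :=
  (minpoly F χ) ^ (n / (minpoly F χ).natDegree)

/-!
A matrix `N` over `F_q` acts on roots of the dehomogenizations by the Möbius transformation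
`x ↦ (N₀₀ x + N₀₁) / (N₁₀ x + N₁₁)`: if `β` is a root of `g(x,1)` and `g ∝ f ∘ N`, then `N · β` is a
root of `f(x,1)`. Möbius transformations preserve cross ratios of four points, and since `N` has
entries in `F_q` the transformation commutes with Frobenius, so the cross ratio of the conjugates
`β, β^q, β^{q²}, β^{q³}` equals that of the conjugates of `N · β`. Since `f(x,1)` is irreducible,
`N · β` and `α` are Galois conjugate, hence so are their cross ratios, which therefore have the same
minimal polynomial.
-/

open Polynomial (homogenize)

lemma aeval_dehom {F K : Type*} [CommRing F] [CommRing K] [Algebra F K]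
    (f : MvPolynomial (Fin 2) F) (x : K) :
    Polynomial.aeval x (dehom f) = aeval ![x, 1] f := by
  rw [dehom, ← AlgHom.comp_apply, MvPolynomial.comp_aeval]
  congr 2
  ext i
  fin_cases i <;> simp

lemma aeval_substM {F K : Type*} [Field F] [CommRing K] [Algebra F K]
    (N : Matrix (Fin 2) (Fin 2) F) (f : MvPolynomial (Fin 2) F) (v : Fin 2 → K) :
    aeval v (substM N f) = aeval ((N.map (algebraMap F K)).mulVec v) f := by
  rw [substM, ← AlgHom.comp_apply, MvPolynomial.comp_aeval]
  congr 2
  ext i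
  simp [Matrix.mulVec, dotProduct, Fin.sum_univ_two]

namespace MvPolynomial.IsHomogeneous

variable {F : Type*} [Field F] {f : MvPolynomial (Fin 2) F} {n : ℕ}

lemma natDegree_dehom_le (hf : f.IsHomogeneous n) : (dehom f).natDegree ≤ n := by
  rw [dehom, f.as_sum, map_sum]
  refine Polynomial.natDegree_sum_le_of_forall_le _ _ fun m hm => ?_
  have hdeg : m 0 + m 1 = n := by
    simpa [Finsupp.weight_apply, Finsupp.sum_fintype, Fin.sum_univ_two] using
      hf (mem_support_iff.mp hm)
  rw [aeval_monomial, Finsupp.prod_fintype _ _ fun _ => pow_zero _, Fin.prod_univ_two]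
  simp only [Matrix.cons_val_zero, Matrix.cons_val_one, one_pow, mul_one]
  exact (Polynomial.natDegree_C_mul_X_pow_le _ _).trans (by omega)

lemma homogenize_dehom (hf : f.IsHomogeneous n) : homogenize (dehom f) n = f :=
  Polynomial.homogenize_eq_of_isHomogeneous hf rfl

lemma coeff_dehom_self (hf : f.IsHomogeneous n) :
    (dehom f).coeff n = coeff (Finsupp.single 0 n) f := by
  conv_rhs => rw [← hf.homogenize_dehom]
  simp [Polynomial.coeff_homogenize]

lemma natDegree_dehom (hf : f.IsHomogeneous n) (hmon : MonicHom f n) :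
    (dehom f).natDegree = n :=
  le_antisymm hf.natDegree_dehom_le
    (Polynomial.le_natDegree_of_ne_zero (by rw [hf.coeff_dehom_self, hmon]; exact one_ne_zero))

lemma monic_dehom (hf : f.IsHomogeneous n) (hmon : MonicHom f n) : (dehom f).Monic := by
  rw [Polynomial.Monic, Polynomial.leadingCoeff, hf.natDegree_dehom hmon, hf.coeff_dehom_self]
  exact hmon

lemma irreducible_dehom (hf : f.IsHomogeneous n) (hmon : MonicHom f n) (hn : n ≠ 0)
    (hirr : Irreducible f) : Irreducible (dehom f) := by
  have hmonic := hf.monic_dehom hmon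
  have hdeg := hf.natDegree_dehom hmon
  refine ⟨Polynomial.not_isUnit_of_natDegree_pos _ (by omega), fun u v huv => ?_⟩
  have hu : u ≠ 0 := by rintro rfl; simp [hmonic.ne_zero] at huv
  have hv : v ≠ 0 := by rintro rfl; simp [hmonic.ne_zero] at huv
  have hsplit : f = homogenize u u.natDegree * homogenize v v.natDegree := by
    rw [← Polynomial.homogenize_mul _ _ le_rfl le_rfl, ← Polynomial.natDegree_mul hu hv, ← huv,
      hdeg, hf.homogenize_dehom]
  let dehomAlgHom : MvPolynomial (Fin 2) F →ₐ[F] Polynomial F :=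
    MvPolynomial.aeval ![Polynomial.X, 1]
  refine (hirr.isUnit_or_isUnit hsplit).imp (fun h => ?_) (fun h => ?_)
  · simpa [dehomAlgHom, Polynomial.aeval_homogenize_X_one _ le_rfl] using h.map dehomAlgHom
  · simpa [dehomAlgHom, Polynomial.aeval_homogenize_X_one _ le_rfl] using h.map dehomAlgHom

variable {K : Type*} [Field K] [Algebra F K]

lemma aeval_eq_pow_mul_aeval_dehom (hf : f.IsHomogeneous n) (x : K) {y : K} (hy : y ≠ 0) :
    MvPolynomial.aeval ![x, y] f = y ^ n * Polynomial.aeval (x / y) (dehom f) := by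
  have hdeg : ((dehom f).map (algebraMap F K)).natDegree ≤ n :=
    Polynomial.natDegree_map_le.trans hf.natDegree_dehom_le
  conv_lhs => rw [← hf.homogenize_dehom]
  rw [aeval_def, ← eval_map, ← Polynomial.homogenize_map,
    Polynomial.eval_homogenize hdeg _ (by simpa), Polynomial.eval_map_algebraMap]
  simp [mul_comm]

lemma aeval_vecCons_zero (hf : f.IsHomogeneous n) (x : K) :
    MvPolynomial.aeval ![x, 0] f = algebraMap F K (coeff (Finsupp.single 0 n) f) * x ^ n := by
  conv_lhs => rw [← hf.homogenize_dehom]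
  rw [Polynomial.homogenize, map_sum, Finset.Nat.sum_antidiagonal_eq_sum_range_succ_mk,
    Finset.sum_range_succ, Finset.sum_eq_zero fun k hk => ?_, zero_add, ← hf.coeff_dehom_self]
  · simp [aeval_monomial, Finsupp.prod_fintype]
  · have hk : n - k ≠ 0 := by rw [Finset.mem_range] at hk; omega
    simp [aeval_monomial, Finsupp.prod_fintype, zero_pow hk]

end MvPolynomial.IsHomogeneous

section Moebius

variable {K : Type*} [Field K]

def moebius (N : Matrix (Fin 2) (Fin 2) K) (x : K) : K :=
  (N 0 0 * x + N 0 1) / (N 1 0 * x + N 1 1)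

def crossRatio₄ (x₀ x₁ x₂ x₃ : K) : K :=
  ((x₃ - x₁) * (x₂ - x₀)) / ((x₃ - x₀) * (x₂ - x₁))

lemma moebius_sub_moebius (N : Matrix (Fin 2) (Fin 2) K) {x y : K}
    (hx : N 1 0 * x + N 1 1 ≠ 0) (hy : N 1 0 * y + N 1 1 ≠ 0) :
    moebius N x - moebius N y =
      N.det * (x - y) / ((N 1 0 * x + N 1 1) * (N 1 0 * y + N 1 1)) := by
  rw [moebius, moebius, div_sub_div _ _ hx hy, Matrix.det_fin_two]
  ring

lemma crossRatio₄_moebius {N : Matrix (Fin 2) (Fin 2) K} (hN : N.det ≠ 0) {x₀ x₁ x₂ x₃ : K}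
    (h₀ : N 1 0 * x₀ + N 1 1 ≠ 0) (h₁ : N 1 0 * x₁ + N 1 1 ≠ 0)
    (h₂ : N 1 0 * x₂ + N 1 1 ≠ 0) (h₃ : N 1 0 * x₃ + N 1 1 ≠ 0) :
    crossRatio₄ (moebius N x₀) (moebius N x₁) (moebius N x₂) (moebius N x₃) =
      crossRatio₄ x₀ x₁ x₂ x₃ := by
  rw [crossRatio₄, crossRatio₄, moebius_sub_moebius N h₃ h₁, moebius_sub_moebius N h₂ h₀,
    moebius_sub_moebius N h₃ h₀, moebius_sub_moebius N h₂ h₁]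
  set d : K → K := fun x => N 1 0 * x + N 1 1
  -- both products of differences carry the same denominator and the same factor `det N ^ 2`
  rw [div_mul_div_comm, div_mul_div_comm, mul_mul_mul_comm (d x₃) (d x₀),
    mul_comm (d x₀) (d x₁), ← mul_mul_mul_comm (d x₃) (d x₁),
    div_div_div_cancel_right₀ (by simp [*]), mul_mul_mul_comm N.det _ N.det,
    mul_mul_mul_comm N.det _ N.det, mul_div_mul_left _ _ (mul_ne_zero hN hN)]

end Moebius

section RootTransport

variable {F : Type*} [Field F] {K : Type*} [Field K] [Algebra F K]

lemma det_map_algebraMap_ne_zero {ι : Type*} [Fintype ι] [DecidableEq ι] {N : Matrix ι ι F}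
    (hN : N.det ≠ 0) :
    (N.map (algebraMap F K)).det ≠ 0 := by
  rw [← RingHom.mapMatrix_apply, ← RingHom.map_det]
  exact (map_ne_zero _).mpr hN

lemma map_moebius {L : Type*} [Field L] [Algebra F L] (φ : K →ₐ[F] L)
    (N : Matrix (Fin 2) (Fin 2) F) (x : K) :
    φ (moebius (N.map (algebraMap F K)) x) = moebius (N.map (algebraMap F L)) (φ x) := by
  simp [moebius, map_div₀]

lemma aeval_moebius_dehom_eq_zero {f : MvPolynomial (Fin 2) F} {n : ℕ} (hf : f.IsHomogeneous n)
    (hmon : MonicHom f n) (hn : n ≠ 0) {N : Matrix (Fin 2) (Fin 2) F} (hN : N.det ≠ 0) {x : K}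
    (hx : aeval ![x, 1] (substM N f) = 0) :
    N.map (algebraMap F K) 1 0 * x + N.map (algebraMap F K) 1 1 ≠ 0 ∧
      Polynomial.aeval (moebius (N.map (algebraMap F K)) x) (dehom f) = 0 := by
  set N' := N.map (algebraMap F K)
  have hvec : N'.mulVec ![x, 1] = ![N' 0 0 * x + N' 0 1, N' 1 0 * x + N' 1 1] := by
    ext i
    fin_cases i <;> simp [Matrix.mulVec, dotProduct]
  rw [aeval_substM, hvec] at hx
  have hden : N' 1 0 * x + N' 1 1 ≠ 0 := by
    intro hden
    rw [hden, hf.aeval_vecCons_zero, hmon, map_one, one_mul] at hx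
    -- `f(t, 0) = t ^ n`, so `N' (x, 1)` would vanish
    have hnum := (pow_eq_zero_iff hn).mp hx
    apply det_map_algebraMap_ne_zero (K := K) hN
    rw [Matrix.det_fin_two]
    linear_combination N' 0 0 * hden - N' 1 0 * hnum
  refine ⟨hden, ?_⟩
  rw [hf.aeval_eq_pow_mul_aeval_dehom _ hden] at hx
  exact (mul_eq_zero.mp hx).resolve_left (pow_ne_zero _ hden)

end RootTransport

lemma map_crossRatio {K L G : Type*} [Field K] [Field L] [FunLike G K L] [RingHomClass G K L]
    (φ : G) (q : ℕ) (x : K) : φ (crossRatio q x) = crossRatio q (φ x) := by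
  simp [crossRatio]

section Frobenius

variable {F : Type*} [Field F] [Fintype F] {K : Type*} [Field K] [Algebra F K]

open FiniteField (frobeniusAlgHom)

lemma frobeniusAlgHom_pow_apply (k : ℕ) (x : K) :
    (frobeniusAlgHom F K ^ k) x = x ^ Fintype.card F ^ k := by
  rw [AlgHom.coe_pow, FiniteField.coe_frobeniusAlgHom, pow_iterate]

lemma crossRatio_card_eq_crossRatio₄ (x : K) :
    crossRatio (Fintype.card F) x =
      crossRatio₄ x ((frobeniusAlgHom F K ^ 1) x) ((frobeniusAlgHom F K ^ 2) x)
        ((frobeniusAlgHom F K ^ 3) x) := by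
  rw [frobeniusAlgHom_pow_apply, frobeniusAlgHom_pow_apply, frobeniusAlgHom_pow_apply, pow_one]
  rfl

lemma crossRatio_moebius {N : Matrix (Fin 2) (Fin 2) F} (hN : N.det ≠ 0) {x : K}
    (hx : N.map (algebraMap F K) 1 0 * x + N.map (algebraMap F K) 1 1 ≠ 0) :
    crossRatio (Fintype.card F) (moebius (N.map (algebraMap F K)) x) =
      crossRatio (Fintype.card F) x := by
  set ψ := frobeniusAlgHom F K
  have hden (k : ℕ) :
      N.map (algebraMap F K) 1 0 * (ψ ^ k) x + N.map (algebraMap F K) 1 1 ≠ 0 := by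
    have hψ := (map_ne_zero (ψ ^ k)).mpr hx
    simpa only [Matrix.map_apply, map_add, map_mul, AlgHom.commutes] using hψ
  rw [crossRatio_card_eq_crossRatio₄, crossRatio_card_eq_crossRatio₄, map_moebius, map_moebius,
    map_moebius, crossRatio₄_moebius (det_map_algebraMap_ne_zero hN) hx (hden 1) (hden 2) (hden 3)]

end Frobenius

theorem cross_polynomial_invariant
    {F : Type*} [Field F] [Fintype F] (q : ℕ) (hq : Fintype.card F = q)
    {K : Type*} [Field K] [Algebra F K] [IsAlgClosure F K]
    (n : ℕ) (hn : 4 ≤ n)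
    (f g : MvPolynomial (Fin 2) F)
    (hfhom : f.IsHomogeneous n)
    (hfmonic : MonicHom f n)
    (hfirr : Irreducible f)
    (horbit : ∃ M : GL (Fin 2) F, ∃ e : Fˣ,
      substM (Matrix.adjugate (M : Matrix (Fin 2) (Fin 2) F)) f = (e : F) • g)
    (α β : K)
    (hα : Polynomial.aeval α (dehom f) = 0)
    (hβ : Polynomial.aeval β (dehom g) = 0) :
    charPolyOfElt F n (crossRatio q α) = charPolyOfElt F n (crossRatio q β) := by
  subst hq
  obtain ⟨M, e, hMe⟩ := horbit
  set N := (M : Matrix (Fin 2) (Fin 2) F).adjugate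
  have hN : N.det ≠ 0 := by simpa [N, Matrix.det_adjugate] using M.det_ne_zero
  have hβN : aeval ![β, 1] (substM N f) = 0 := by
    rw [hMe, map_smul, ← aeval_dehom, hβ, smul_zero]
  obtain ⟨hden, hroot⟩ := aeval_moebius_dehom_eq_zero hfhom hfmonic (by omega) hN hβN
  have hirr := hfhom.irreducible_dehom hfmonic (by omega) hfirr
  have hmonic := hfhom.monic_dehom hfmonic
  have hconj : minpoly F α = minpoly F (moebius (N.map (algebraMap F K)) β) := by
    rw [← minpoly.eq_of_irreducible_of_monic hirr hα hmonic,
      ← minpoly.eq_of_irreducible_of_monic hirr hroot hmonic]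
  obtain ⟨σ, hσ⟩ := (Normal.minpoly_eq_iff_mem_orbit K).mp hconj
  simp only [AlgEquiv.smul_def] at hσ
  rw [charPolyOfElt, charPolyOfElt, ← crossRatio_moebius hN hden, ← hσ, ← map_crossRatio,
    minpoly.algEquiv_eq]
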